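/- arXiv:1712.10017 — 6 statements merged into one kernel-verified Lean document; each statement's English description precedes it below -/
import Mathlib

section
/- Let q be a prime power, d a divisor of q-1, r a positive integer with 1 ≤ r < (q-1)/d, and h(x) a polynomial over F_q. The polynomial f(x) = x^r · h(x^{(q-1)/d}) is a permutation polynomial of F_q if and only if gcd(r, (q-1)/d) = 1 and the map x ↦ x^r · h(x)^{(q-1)/d} permutes the set μ_d of d-th roots of unity in F_q. -/
/-!
Put `s = (q - 1) / d`, `f x = x ^ r * h (x ^ s)` and `g x = x ^ r * h x ^ s`. Then `f x ^ s = g (x ^ s)`,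
and `x ↦ x ^ s` maps `Fˣ` onto `μ_d` (the group `Fˣ` is cyclic of order `d * s`). Hence an injective
`f`, which fixes `0`, forces `g` to permute `μ_d`; and `gcd(r, s) = e > 1` is impossible, since an
`e`-th root of unity `ζ ≠ 1` gives `f ζ = f 1`. Conversely, if `f x = f y` with `x, y ≠ 0`, injectivity
of `g` on `μ_d` gives `x ^ s = y ^ s`, then `x ^ r = y ^ r`, and coprimality gives `x = y`.
-/

open Polynomial Function

theorem IsCyclic.exists_pow_eq_of_pow_eq_one {G : Type*} [CommGroup G] [Finite G] [IsCyclic G]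
    {d s : ℕ} (hds : d * s = Nat.card G) {a : G} (ha : a ^ d = 1) : ∃ x, x ^ s = a := by
  have hs : s ≠ 0 := by rintro rfl; rw [mul_zero] at hds; exact Nat.card_pos.ne hds
  have hle : (powMonoidHom s : G →* G).range ≤ (powMonoidHom d).ker := by
    rintro _ ⟨x, rfl⟩
    simp [← pow_mul, mul_comm s d, hds, pow_card_eq_one']
  have hcard : Nat.card (powMonoidHom d : G →* G).ker ≤ Nat.card (powMonoidHom s : G →* G).range := by
    rw [IsCyclic.card_powMonoidHom_ker, IsCyclic.card_powMonoidHom_range, ← hds,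
      Nat.gcd_mul_right_left, Nat.gcd_mul_left_left, Nat.mul_div_cancel _ hs.bot_lt]
  obtain ⟨x, hx⟩ := (Subgroup.eq_of_le_of_card_ge hle hcard).ge (show a ∈ (powMonoidHom d).ker from ha)
  exact ⟨x, hx⟩

theorem exists_ne_one_pow_eq_one {G : Type*} [Group G] [Finite G] {e : ℕ}
    (he : e ∣ Nat.card G) (he1 : e ≠ 1) : ∃ ζ : G, ζ ≠ 1 ∧ ζ ^ e = 1 := by
  have hp := Nat.minFac_prime he1
  have : Fact e.minFac.Prime := ⟨hp⟩
  obtain ⟨ζ, hζ⟩ := exists_prime_orderOf_dvd_card' e.minFac ((Nat.minFac_dvd e).trans he)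
  refine ⟨ζ, fun h1 => ?_, ?_⟩
  · rw [h1, orderOf_one] at hζ; exact hp.one_lt.ne hζ
  · exact orderOf_dvd_iff_pow_eq_one.mp (hζ ▸ Nat.minFac_dvd e)

theorem eq_of_pow_eq_of_pow_eq_of_coprime {M : Type*} [CommGroupWithZero M] {x y : M} {r s : ℕ}
    (hrs : r.Coprime s) (hr : x ^ r = y ^ r) (hs : x ^ s = y ^ s) : x = y := by
  rcases eq_or_ne y 0 with rfl | hy
  · rcases eq_or_ne r 0 with rfl | hr0
    · rw [Nat.coprime_zero_left] at hrs
      simpa [hrs] using hs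
    · exact pow_eq_zero_iff hr0 |>.mp (hr.trans (zero_pow hr0))
  · have hxy : (x / y) ^ r.gcd s = 1 := pow_gcd_eq_one.mpr
      ⟨by rw [div_pow, hr, div_self (pow_ne_zero _ hy)], by rw [div_pow, hs, div_self (pow_ne_zero _ hy)]⟩
    rwa [hrs, pow_one, div_eq_one_iff_eq hy] at hxy

namespace FiniteField

variable {F : Type*} [Field F] [Fintype F] {d s : ℕ}

theorem pow_pow_eq_one_iff_ne_zero (hds : d * s = Fintype.card F - 1) {x : F} :
    (x ^ s) ^ d = 1 ↔ x ≠ 0 := by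
  rw [← pow_mul, mul_comm, hds]
  refine ⟨?_, pow_card_sub_one_eq_one x⟩
  rintro h rfl
  have := Fintype.one_lt_card (α := F)
  rw [zero_pow (by omega)] at h
  exact zero_ne_one h

theorem exists_ne_zero_pow_eq (hds : d * s = Fintype.card F - 1) {a : F} (ha : a ^ d = 1) :
    ∃ x ≠ 0, x ^ s = a := by
  have hd : d ≠ 0 := by
    rintro rfl
    have := Fintype.one_lt_card (α := F)
    omega
  have ha0 : a ≠ 0 := ne_zero_pow hd (ha ▸ one_ne_zero)
  obtain ⟨u, hu⟩ := IsCyclic.exists_pow_eq_of_pow_eq_one (G := Fˣ)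
    (by rwa [Nat.card_units, Nat.card_eq_fintype_card]) (a := Units.mk0 a ha0) (by ext; simpa)
  exact ⟨u, u.ne_zero, by simpa using congrArg Units.val hu⟩

variable {r : ℕ} {h : F[X]}

theorem coprime_of_injective (hs : s ∣ Fintype.card F - 1)
    (hf : Injective fun x : F => x ^ r * h.eval (x ^ s)) : r.Coprime s := by
  by_contra hrs
  obtain ⟨ζ, hζ1, hζ⟩ := exists_ne_one_pow_eq_one (G := Fˣ)
    ((Nat.gcd_dvd_right r s).trans (by rwa [Nat.card_units, Nat.card_eq_fintype_card])) hrs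
  obtain ⟨hζr, hζs⟩ := pow_gcd_eq_one.mp hζ
  exact hζ1 (Units.ext (hf (by simp [← Units.val_pow_eq_pow_val, hζr, hζs])))

theorem bijOn_of_injective (hds : d * s = Fintype.card F - 1) (hr : r ≠ 0)
    (hf : Injective fun x : F => x ^ r * h.eval (x ^ s)) :
    Set.BijOn (fun x : F => x ^ r * h.eval x ^ s) {x | x ^ d = 1} {x | x ^ d = 1} := by
  have hpow (x : F) : (x ^ r * h.eval (x ^ s)) ^ s = (x ^ s) ^ r * h.eval (x ^ s) ^ s := by
    rw [mul_pow, pow_right_comm]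
  have hf0 : (0 : F) ^ r * h.eval (0 ^ s) = 0 := by rw [zero_pow hr, zero_mul]
  refine ((Set.toFinite _).surjOn_iff_bijOn_of_mapsTo ?_).mp ?_
  · rintro _ ha
    obtain ⟨x, hx, rfl⟩ := exists_ne_zero_pow_eq hds ha
    show ((x ^ s) ^ r * h.eval (x ^ s) ^ s) ^ d = 1
    rw [← hpow, pow_pow_eq_one_iff_ne_zero hds]
    exact fun h0 => hx (hf (h0.trans hf0.symm))
  · rintro _ hb
    obtain ⟨y, hy, rfl⟩ := exists_ne_zero_pow_eq hds hb
    obtain ⟨x, rfl⟩ := Finite.injective_iff_surjective.mp hf y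
    refine ⟨x ^ s, (pow_pow_eq_one_iff_ne_zero hds).mpr ?_, (hpow x).symm⟩
    rintro rfl
    exact hy hf0

theorem injective_of_bijOn (hds : d * s = Fintype.card F - 1) (hr : r ≠ 0) (hrs : r.Coprime s)
    (hg : Set.BijOn (fun x : F => x ^ r * h.eval x ^ s) {x | x ^ d = 1} {x | x ^ d = 1}) :
    Injective fun x : F => x ^ r * h.eval (x ^ s) := by
  have hpow (x : F) : (x ^ r * h.eval (x ^ s)) ^ s = (x ^ s) ^ r * h.eval (x ^ s) ^ s := by
    rw [mul_pow, pow_right_comm]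
  have hf0 : (0 : F) ^ r * h.eval (0 ^ s) = 0 := by rw [zero_pow hr, zero_mul]
  have hfne {x : F} (hx : x ≠ 0) : x ^ r * h.eval (x ^ s) ≠ 0 := by
    rw [← pow_pow_eq_one_iff_ne_zero hds, hpow]
    exact hg.mapsTo ((pow_pow_eq_one_iff_ne_zero hds).mpr hx)
  intro x y hxy
  beta_reduce at hxy
  obtain rfl | hx := eq_or_ne x 0
  · by_contra hy
    exact hfne (Ne.symm hy) (hxy.symm.trans hf0)
  obtain rfl | hy := eq_or_ne y 0
  · exact absurd (hxy.trans hf0) (hfne hx)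
  have hs : x ^ s = y ^ s := hg.injOn ((pow_pow_eq_one_iff_ne_zero hds).mpr hx)
    ((pow_pow_eq_one_iff_ne_zero hds).mpr hy) (by simp only [← hpow, hxy])
  rw [hs] at hxy
  exact eq_of_pow_eq_of_pow_eq_of_coprime hrs
    (mul_right_cancel₀ (right_ne_zero_of_mul (hfne hy)) hxy) hs

end FiniteField

open FiniteField in
theorem stmt_0_general {F : Type*} [Field F] [Fintype F] (q : ℕ) (hq : Fintype.card F = q)
    (d r : ℕ) (hd : d ∣ q - 1) (hr1 : 1 ≤ r)
    (h : Polynomial F) :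
    Function.Bijective (fun x : F => x ^ r * h.eval (x ^ ((q - 1) / d))) ↔
      (Nat.gcd r ((q - 1) / d) = 1 ∧
        Set.BijOn (fun x : F => x ^ r * (h.eval x) ^ ((q - 1) / d))
          {x : F | x ^ d = 1} {x : F | x ^ d = 1}) := by
  subst hq
  have hds : d * ((Fintype.card F - 1) / d) = Fintype.card F - 1 := Nat.mul_div_cancel' hd
  have hr : r ≠ 0 := Nat.one_le_iff_ne_zero.mp hr1
  rw [← Finite.injective_iff_bijective]
  exact ⟨fun hf => ⟨coprime_of_injective (Dvd.intro_left _ hds) hf, bijOn_of_injective hds hr hf⟩,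
    fun ⟨hrs, hg⟩ => injective_of_bijOn hds hr hrs hg⟩

/-- Criterion of Park–Lee / Zieve: `x^r h(x^{(q-1)/d})` is a permutation polynomial of
`F_q` iff `gcd(r,(q-1)/d)=1` and `x ↦ x^r h(x)^{(q-1)/d}` permutes the `d`-th roots of unity. -/
theorem stmt_0 {F : Type*} [Field F] [Fintype F] (q : ℕ) (hq : Fintype.card F = q)
    (d r : ℕ) (hd : d ∣ q - 1) (hr1 : 1 ≤ r) (hr2 : r < (q - 1) / d)
    (h : Polynomial F) :
    Function.Bijective (fun x : F => x ^ r * h.eval (x ^ ((q - 1) / d))) ↔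
      (Nat.gcd r ((q - 1) / d) = 1 ∧
        Set.BijOn (fun x : F => x ^ r * (h.eval x) ^ ((q - 1) / d))
          {x : F | x ^ d = 1} {x : F | x ^ d = 1}) :=
  stmt_0_general q hq d r hd hr1 h
end

section
/- Let q = 2^m and α, β ∈ F_{q^2} with αβ ≠ 0. The polynomial f(x) = x + α·x^{q(q-1)+1} + β·x^{2(q-1)+1} is a permutation polynomial of F_{q^2} if and only if the rational map g(x) = (α^q·x^3 + x^2 + β^q)/(β·x^3 + x + α) induces a permutation of the set μ_{q+1} of (q+1)-st roots of unity in F_{q^2}. -/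
lemma aux_char2 {E : Type*} [Field E] [Fintype E] (m : ℕ)
    (hE : Fintype.card E = (2 ^ m) ^ 2) : CharP E 2 := by
  obtain ⟨p, hp⟩ := CharP.exists E
  haveI := hp
  have hprime : p.Prime := CharP.char_is_prime E p
  obtain ⟨n, -, hcard⟩ := FiniteField.card E p
  have h2 : p ^ (n : ℕ) = 2 ^ (m * 2) := by rw [← hcard, hE, ← pow_mul]
  have hdvd : p ∣ 2 := hprime.dvd_of_dvd_pow (h2 ▸ dvd_pow_self p n.ne_zero)
  have : p = 2 := (Nat.prime_dvd_prime_iff_eq hprime Nat.prime_two).mp hdvd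
  exact this ▸ hp

lemma aux_surj {E : Type*} [Field E] [Fintype E] (k : ℕ)
    (hcard : Fintype.card E = (k+1)^2) (y : E) (hy : y ^ (k+2) = 1) :
    ∃ x : E, x ≠ 0 ∧ x ^ k = y := by
  have hy0 : y ≠ 0 := by
    rintro rfl
    rw [zero_pow (by omega)] at hy
    exact zero_ne_one hy
  obtain ⟨g, hg⟩ := IsCyclic.exists_generator (α := Eˣ)
  have hord : orderOf g = k * (k+2) := by
    classical
    rw [orderOf_eq_card_of_forall_mem_zpowers hg, Nat.card_eq_fintype_card,
      Fintype.card_units, hcard]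
    ring_nf
    omega
  set u : Eˣ := Units.mk0 y hy0 with hu_def
  obtain ⟨n, hn⟩ := hg u
  have hn' : g ^ n = u := hn
  have hu : u ^ (k+2) = 1 := by
    ext
    push_cast
    exact hy
  have hdvd : ((k:ℤ) * (k+2)) ∣ n * (k+2) := by
    have h2 : (orderOf g : ℤ) ∣ n * (k+2) := by
      rw [orderOf_dvd_iff_zpow_eq_one, zpow_mul, hn']
      rw [show ((k:ℤ)+2) = ((k+2 : ℕ) : ℤ) by push_cast; ring, zpow_natCast, hu]
    rw [hord] at h2
    convert h2 using 2 <;> push_cast <;> ring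
  have hkn : (k:ℤ) ∣ n := by
    have h2 : ((k:ℤ)+2) ≠ 0 := by positivity
    exact (mul_dvd_mul_iff_right h2).mp hdvd
  obtain ⟨t, rfl⟩ := hkn
  refine ⟨((g ^ t : Eˣ) : E), Units.ne_zero _, ?_⟩
  have h3 : (g ^ t) ^ (k:ℕ) = u := by
    rw [← zpow_natCast, ← zpow_mul, mul_comm]
    exact hn
  calc ((g ^ t : Eˣ) : E) ^ k = (((g ^ t) ^ (k:ℕ) : Eˣ) : E) := by push_cast; ring
    _ = y := by rw [h3]; rfl



/-- `f(x) = x + α x^{q(q-1)+1} + β x^{2(q-1)+1}` permutes `F_{q^2}` iff the fractional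
polynomial `g(x) = (α^q x^3 + x^2 + β^q)/(β x^3 + x + α)` permutes `μ_{q+1}`
(including well-definedness of `g` on `μ_{q+1}`). -/
theorem stmt_1 {E : Type*} [Field E] [Fintype E] (m : ℕ) (hm : 0 < m)
    (hE : Fintype.card E = (2 ^ m) ^ 2) (α β : E) (hαβ : α * β ≠ 0) :
    Function.Bijective
        (fun x : E => x + α * x ^ (2 ^ m * (2 ^ m - 1) + 1) + β * x ^ (2 * (2 ^ m - 1) + 1)) ↔
      ((∀ x : E, x ^ (2 ^ m + 1) = 1 → β * x ^ 3 + x + α ≠ 0) ∧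
        Set.BijOn
          (fun x : E => (α ^ (2 ^ m) * x ^ 3 + x ^ 2 + β ^ (2 ^ m)) / (β * x ^ 3 + x + α))
          {x : E | x ^ (2 ^ m + 1) = 1} {x : E | x ^ (2 ^ m + 1) = 1}) := by
  have h2m : 2 ≤ 2 ^ m := by
    calc 2 = 2^1 := rfl
    _ ≤ 2^m := Nat.pow_le_pow_right (by norm_num) hm
  obtain ⟨k, hk⟩ : ∃ k, 2 ^ m = k + 1 := ⟨2 ^ m - 1, by omega⟩
  have hk1 : 1 ≤ k := by omega
  have hsub : 2 ^ m - 1 = k := by omega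
  have hα : α ≠ 0 := fun h => hαβ (by rw [h, zero_mul])
  have hβ : β ≠ 0 := fun h => hαβ (by rw [h, mul_zero])
  haveI hchar : CharP E 2 := aux_char2 m hE
  haveI hfact : Fact (Nat.Prime 2) := ⟨Nat.prime_two⟩
  have hfrob : ∀ a b : E, (a + b) ^ (k+1) = a ^ (k+1) + b ^ (k+1) := by
    intro a b
    rw [← hk]
    exact add_pow_char_pow (R := E) (p := 2) (n := m) a b
  have hcard : Fintype.card E = (k+1)^2 := by rw [hE, hk]
  have hpow : ∀ x : E, x ^ ((k+1)^2) = x := by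
    intro x
    rw [← hcard]
    exact FiniteField.pow_card x
  have hxx : ∀ x : E, x ≠ 0 → x ^ (k*(k+2)) = 1 := by
    intro x hx
    have h1 : x ^ (k*(k+2)) * x = 1 * x := by
      rw [one_mul, ← pow_succ, show k*(k+2)+1 = (k+1)^2 by ring, hpow]
    exact mul_right_cancel₀ hx h1
  have hmem : ∀ x : E, x ≠ 0 → (x^k) ^ (k+2) = 1 := by
    intro x hx
    rw [← pow_mul]
    exact hxx x hx
  have hrel : ∀ x : E, x ≠ 0 →
      x^k * (x + α * x^((k+1)*k+1) + β * x^(2*k+1)) = x * (β*(x^k)^3 + x^k + α) := by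
    intro x hx
    linear_combination (α * x) * hxx x hx
  have hmaster : ∀ x : E, x ≠ 0 →
      α^(k+1)*(x^k)^3 + (x^k)^2 + β^(k+1)
        = (β*(x^k)^3 + x^k + α) * (x + α * x^((k+1)*k+1) + β * x^(2*k+1))^k := by
    intro x hx
    have hyk : x ^ (k*(k+2)*k) = 1 := by rw [pow_mul, hxx x hx, one_pow]
    have hy2 : x ^ (k*(k+2)*2) = 1 := by rw [pow_mul, hxx x hx, one_pow]
    have hE1 : x + α * x^((k+1)*k+1) + β * x^(2*k+1)
        = x * (1 + α*(x^k)^(k+1) + β*(x^k)^2) := by ring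
    have hstep : (1 + α*(x^k)^(k+1) + β*(x^k)^2)^(k+1)
        = 1 + α^(k+1)*((x^k)^(k+1))^(k+1) + β^(k+1)*((x^k)^2)^(k+1) := by
      rw [hfrob, hfrob, one_pow, mul_pow, mul_pow]
    have hE3 : α^(k+1)*(x^k)^3 + (x^k)^2 + β^(k+1)
        = (x^k)^2 * (1 + α*(x^k)^(k+1) + β*(x^k)^2)^(k+1) := by
      rw [hstep]
      linear_combination (-(α^(k+1) * x^(3*k))) * hyk + (-(β^(k+1))) * hy2
    have hE2 : β*(x^k)^3 + x^k + α = x^k * (1 + α*(x^k)^(k+1) + β*(x^k)^2) := by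
      linear_combination (-α) * hmem x hx
    rw [hE3, hE2, hE1, mul_pow]
    ring
  have hFne : ∀ x : E, x ≠ 0 → (β*(x^k)^3 + x^k + α) ≠ 0 →
      (x + α * x^((k+1)*k+1) + β * x^(2*k+1)) ≠ 0 := by
    intro x hx hD h0
    have h1 := hrel x hx
    rw [h0, mul_zero] at h1
    exact hD ((mul_eq_zero.mp h1.symm).resolve_left hx)
  have hgF : ∀ x : E, x ≠ 0 → (β*(x^k)^3 + x^k + α) ≠ 0 →
      (α^(k+1)*(x^k)^3 + (x^k)^2 + β^(k+1)) / (β*(x^k)^3 + x^k + α)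
        = (x + α * x^((k+1)*k+1) + β * x^(2*k+1))^k := by
    intro x hx hD
    rw [hmaster x hx]
    exact mul_div_cancel_left₀ _ hD
  simp only [hsub]
  simp only [hk]
  constructor
  · intro hbij
    have hnz : ∀ y : E, y ^ (k+1+1) = 1 → β*y^3 + y + α ≠ 0 := by
      intro y hy hD0
      obtain ⟨x, hx0, hxk⟩ := aux_surj k hcard y hy
      have hy0 : y ≠ 0 := by
        rintro rfl
        rw [zero_pow (by omega)] at hy
        exact zero_ne_one hy
      have h1 := hrel x hx0
      rw [hxk, hD0, mul_zero] at h1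
      have hF0 : x + α * x^((k+1)*k+1) + β * x^(2*k+1) = 0 :=
        (mul_eq_zero.mp h1).resolve_left hy0
      have h2 : (fun x : E => x + α * x^((k+1)*k+1) + β * x^(2*k+1)) x
          = (fun x : E => x + α * x^((k+1)*k+1) + β * x^(2*k+1)) 0 := by
        simp only [hF0]
        rw [zero_pow (by omega), zero_pow (by omega)]
        ring
      exact hx0 (hbij.injective h2)
    refine ⟨hnz, ?_⟩
    have hmapsTo : Set.MapsTo
        (fun y : E => (α^(k+1)*y^3 + y^2 + β^(k+1)) / (β*y^3 + y + α))
        {y : E | y ^ (k+1+1) = 1} {y : E | y ^ (k+1+1) = 1} := by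
      intro y hy
      simp only [Set.mem_setOf_eq] at hy ⊢
      obtain ⟨x, hx0, hxk⟩ := aux_surj k hcard y hy
      have hD : β*y^3 + y + α ≠ 0 := hnz y hy
      subst hxk
      rw [hgF x hx0 hD]
      exact hmem _ (hFne x hx0 hD)
    have hinjOn : Set.InjOn
        (fun y : E => (α^(k+1)*y^3 + y^2 + β^(k+1)) / (β*y^3 + y + α))
        {y : E | y ^ (k+1+1) = 1} := by
      intro y1 hy1 y2 hy2 hgeq
      simp only [Set.mem_setOf_eq] at hy1 hy2
      obtain ⟨x1, hx10, hxk1⟩ := aux_surj k hcard y1 hy1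
      obtain ⟨x2, hx20, hxk2⟩ := aux_surj k hcard y2 hy2
      subst hxk1
      subst hxk2
      have hD1 : β*(x1^k)^3 + x1^k + α ≠ 0 := hnz _ hy1
      have hD2 : β*(x2^k)^3 + x2^k + α ≠ 0 := hnz _ hy2
      have hF1 := hFne x1 hx10 hD1
      have hF2 := hFne x2 hx20 hD2
      have hgeq' : (α^(k+1)*(x1^k)^3 + (x1^k)^2 + β^(k+1)) / (β*(x1^k)^3 + x1^k + α)
          = (α^(k+1)*(x2^k)^3 + (x2^k)^2 + β^(k+1)) / (β*(x2^k)^3 + x2^k + α) := hgeq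
      rw [hgF x1 hx10 hD1, hgF x2 hx20 hD2] at hgeq'
      set c : E := (x2 + α * x2^((k+1)*k+1) + β * x2^(2*k+1))
        * (x1 + α * x1^((k+1)*k+1) + β * x1^(2*k+1))⁻¹ with hc_def
      have hck : c ^ k = 1 := by
        rw [hc_def, mul_pow, inv_pow, ← hgeq', mul_inv_cancel₀ (pow_ne_zero k hF1)]
      have e1 : c ^ ((k+1)*k+1) = c := by
        rw [show (k+1)*k+1 = k*(k+1)+1 by ring, pow_succ, pow_mul, hck, one_pow, one_mul]
      have e2 : c ^ (2*k+1) = c := by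
        rw [show 2*k+1 = k*2+1 by ring, pow_succ, pow_mul, hck, one_pow, one_mul]
      have hcx : (fun x : E => x + α * x^((k+1)*k+1) + β * x^(2*k+1)) (c * x1)
          = (fun x : E => x + α * x^((k+1)*k+1) + β * x^(2*k+1)) x2 := by
        simp only [mul_pow, e1, e2]
        rw [show c*x1 + α*(c*x1^((k+1)*k+1)) + β*(c*x1^(2*k+1))
            = c * (x1 + α * x1^((k+1)*k+1) + β * x1^(2*k+1)) by ring]
        rw [hc_def, mul_assoc, inv_mul_cancel₀ hF1, mul_one]
      have hceq : c * x1 = x2 := hbij.injective hcx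
      rw [← hceq, mul_pow, hck, one_mul]
    exact ((Set.toFinite _).injOn_iff_bijOn_of_mapsTo hmapsTo).mp hinjOn
  · rintro ⟨hnz, hbij⟩
    rw [← Finite.injective_iff_bijective]
    intro a b hab
    have hab' : a + α * a^((k+1)*k+1) + β * a^(2*k+1)
        = b + α * b^((k+1)*k+1) + β * b^(2*k+1) := hab
    have hzero : ∀ x : E, x ≠ 0 → x + α * x^((k+1)*k+1) + β * x^(2*k+1) ≠ 0 := by
      intro x hx
      exact hFne x hx (hnz (x^k) (hmem x hx))
    by_cases ha : a = 0
    · subst ha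
      by_cases hb : b = 0
      · exact hb.symm
      · exfalso
        apply hzero b hb
        rw [← hab']
        rw [zero_pow (by omega : (k+1)*k+1 ≠ 0), zero_pow (by omega : 2*k+1 ≠ 0)]
        ring
    · by_cases hb : b = 0
      · subst hb
        exfalso
        apply hzero a ha
        rw [hab']
        rw [zero_pow (by omega : (k+1)*k+1 ≠ 0), zero_pow (by omega : 2*k+1 ≠ 0)]
        ring
      · have hDa : β*(a^k)^3 + a^k + α ≠ 0 := hnz (a^k) (hmem a ha)
        have hDb : β*(b^k)^3 + b^k + α ≠ 0 := hnz (b^k) (hmem b hb)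
        have hgg : (α^(k+1)*(a^k)^3 + (a^k)^2 + β^(k+1)) / (β*(a^k)^3 + a^k + α)
            = (α^(k+1)*(b^k)^3 + (b^k)^2 + β^(k+1)) / (β*(b^k)^3 + b^k + α) := by
          rw [hgF a ha hDa, hgF b hb hDb, hab']
        have hyy : a^k = b^k := hbij.injOn (hmem a ha) (hmem b hb) hgg
        have h1 := hrel a ha
        have h2 := hrel b hb
        rw [hab', hyy] at h1
        have h3 : a * (β*(b^k)^3 + b^k + α) = b * (β*(b^k)^3 + b^k + α) := by
          rw [← h1, ← h2]
        exact mul_right_cancel₀ hDb h3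
end

section
/- Let q = 2^m, i ∈ F_{q^2} with i^2 = i + k, Tr(k) = 1, α = A + iB, β = C + iD with A,B,C,D ∈ F_q, α ≠ 0. Then β = α^{q-1} ∈ F_{q^2} \ F_q, Tr(1 + 1/α^{q+1}) = 0, and α + α^q ≠ β + β^q hold if and only if A = B(C+D+1)/D, kD^2 + C^2 + CD + 1 = 0, BD(B+D) ≠ 0, and Tr(1 + D/B^2) = 0. -/
/-- The absolute trace `Tr(z) = z + z^2 + z^4 + ⋯ + z^{2^{m-1}}`, computed inside the field. -/
def traceSum {F : Type*} [Field F] (m : ℕ) (z : F) : F :=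
  ∑ j ∈ Finset.range m, z ^ 2 ^ j

theorem charP_two_of_card' {F : Type*} [Field F] [Fintype F] {n : ℕ} (hn : 0 < n)
    (hF : Fintype.card F = 2 ^ n) : CharP F 2 := by
  have h2 : (2 : F) = 0 := by
    have h := FiniteField.cast_card_eq_zero F
    rw [hF] at h
    push_cast at h
    exact pow_eq_zero_iff hn.ne' |>.mp h
  have hdvd : ringChar F ∣ 2 := ringChar.dvd (by exact_mod_cast h2)
  have hp : (ringChar F).Prime := CharP.char_is_prime F (ringChar F)
  have : ringChar F = 2 := (Nat.prime_dvd_prime_iff_eq hp Nat.prime_two).mp hdvd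
  exact this ▸ ringChar.charP F

theorem traceSum_map' {F E : Type*} [Field F] [Field E] (f : F →+* E) (m : ℕ) (z : F) :
    traceSum m (f z) = f (traceSum m z) := by
  simp [traceSum, map_sum, map_pow]

theorem traceSum_add' {F : Type*} [Field F] [CharP F 2] (m : ℕ) (x y : F) :
    traceSum m (x + y) = traceSum m x + traceSum m y := by
  haveI : Fact (Nat.Prime 2) := ⟨Nat.prime_two⟩
  simp only [traceSum, add_pow_char_pow, Finset.sum_add_distrib]

theorem traceSum_sq' {F : Type*} [Field F] [CharP F 2] (m : ℕ) (x : F) (hx : x ^ 2 ^ m = x) :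
    traceSum m (x ^ 2) = traceSum m x := by
  haveI : Fact (Nat.Prime 2) := ⟨Nat.prime_two⟩
  have h1 : traceSum m x + x ^ 2 ^ m = ∑ j ∈ Finset.range (m + 1), x ^ 2 ^ j :=
    (Finset.sum_range_succ (fun j => x ^ 2 ^ j) m).symm
  have h2 : traceSum m (x ^ 2) + x = ∑ j ∈ Finset.range (m + 1), x ^ 2 ^ j := by
    rw [Finset.sum_range_succ' (fun j => x ^ 2 ^ j) m]
    simp only [traceSum, ← pow_mul, ← pow_succ', pow_zero, pow_one]
  rw [hx] at h1
  exact (add_right_cancel (h1.trans h2.symm)).symm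

theorem pow_frob_i' {F E : Type*} [Field F] [Field E] [Algebra F E] [CharP F 2] [CharP E 2]
    (k : F) (i : E) (hi : i ^ 2 = i + algebraMap F E k) (j : ℕ) :
    i ^ 2 ^ j = i + algebraMap F E (traceSum j k) := by
  haveI : Fact (Nat.Prime 2) := ⟨Nat.prime_two⟩
  induction j with
  | zero => simp [traceSum]
  | succ j ih =>
    have hp : i ^ 2 ^ (j + 1) = (i ^ 2 ^ j) ^ 2 := by rw [← pow_mul, pow_succ]
    rw [hp, ih, add_pow_char (p := 2), hi, ← map_pow]
    have hF : (traceSum j k) ^ 2 + k = traceSum (j + 1) k := by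
      simp only [traceSum, sum_pow_char (p := 2), ← pow_mul, ← pow_succ]
      rw [Finset.sum_range_succ' (fun l => k ^ 2 ^ l) j]
      simp
    rw [show i + algebraMap F E k + algebraMap F E (traceSum j k ^ 2)
        = i + algebraMap F E (traceSum j k ^ 2 + k) by rw [map_add]; ring]
    rw [hF]

/-- `β = α^{q-1} ∈ F_{q^2} \ F_q`, `Tr(1 + 1/α^{q+1}) = 0` and `α + α^q ≠ β + β^q` hold iff
`A = B(C+D+1)/D`, `kD^2 + C^2 + CD + 1 = 0`, `BD(B+D) ≠ 0` and `Tr(1 + D/B^2) = 0`. -/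
theorem stmt_11 {F E : Type*} [Field F] [Fintype F] [Field E] [Fintype E] [Algebra F E]
    (m : ℕ) (hm : 0 < m) (hF : Fintype.card F = 2 ^ m) (hE : Fintype.card E = (2 ^ m) ^ 2)
    (k : F) (hk : traceSum m k = 1) (i : E) (hi : i ^ 2 = i + algebraMap F E k)
    (A B C D : F) (α β : E)
    (hα : α = algebraMap F E A + i * algebraMap F E B)
    (hβ : β = algebraMap F E C + i * algebraMap F E D)
    (hα0 : α ≠ 0) :
    (β = α ^ (2 ^ m - 1) ∧ β ∉ Set.range (algebraMap F E) ∧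
        traceSum m (1 + 1 / α ^ (2 ^ m + 1)) = 0 ∧
        α + α ^ 2 ^ m ≠ β + β ^ 2 ^ m) ↔
      (A = B * (C + D + 1) / D ∧ k * D ^ 2 + C ^ 2 + C * D + 1 = 0 ∧
        B * D * (B + D) ≠ 0 ∧ traceSum m (1 + D / B ^ 2) = 0) := by
  haveI hc2F : CharP F 2 := charP_two_of_card' hm hF
  haveI hc2E : CharP E 2 := charP_two_of_card' (n := 2 * m) (by positivity)
    (by rw [hE]; rw [← pow_mul, mul_comm])
  haveI : Fact (Nat.Prime 2) := ⟨Nat.prime_two⟩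
  set f := algebraMap F E with hfdef
  have inj : Function.Injective f := (algebraMap F E).injective
  have h2E : (2 : E) = 0 := CharTwo.two_eq_zero
  have h2F : (2 : F) = 0 := CharTwo.two_eq_zero
  have hfrobF : ∀ x : F, x ^ 2 ^ m = x := fun x => by rw [← hF]; exact FiniteField.pow_card x
  have hone : (1 : ℕ) ≤ 2 ^ m := Nat.one_le_two_pow
  have hiq : i ^ 2 ^ m = i + 1 := by rw [pow_frob_i' k i hi m, hk, map_one]
  have hinot : i ∉ Set.range f := by
    rintro ⟨t, ht⟩
    have ht2 : t ^ 2 = t + k := by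
      apply inj
      rw [map_add, map_pow, ht, hi]
    have h0 : traceSum m k = 0 := by
      have h := traceSum_add' m t k
      rw [← ht2, traceSum_sq' m t (hfrobF t)] at h
      have h' : traceSum m t + 0 = traceSum m t + traceSum m k := by rw [add_zero]; exact h
      exact (add_left_cancel h').symm
    rw [hk] at h0; exact one_ne_zero h0
  have indep : ∀ u v : F, f u + i * f v = 0 → u = 0 ∧ v = 0 := by
    intro u v huv
    by_cases hv : v = 0
    · subst hv
      rw [map_zero, mul_zero, add_zero] at huv
      exact ⟨inj (by rw [huv, map_zero]), rfl⟩
    · exfalso; apply hinot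
      have hv' : f v ≠ 0 := fun h => hv (inj (by rw [h, map_zero]))
      refine ⟨u / v, ?_⟩
      rw [map_div₀, div_eq_iff hv']
      linear_combination -huv + f u * h2E
  have prod : ∀ X Y Z W : F, (f Z + i * f W) * (f X + i * f Y)
      = f (X * Z + k * Y * W) + i * f (Z * Y + X * W + Y * W) := by
    intro X Y Z W
    simp only [map_add, map_mul]
    linear_combination (f Y * f W) * hi
  have frob : ∀ X Y : F, (f X + i * f Y) ^ 2 ^ m = f (X + Y) + i * f Y := by
    intro X Y
    rw [add_pow_char_pow (p := 2), mul_pow, ← map_pow, ← map_pow, hfrobF, hfrobF, hiq, map_add]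
    ring
  have hαq : α ^ 2 ^ m = f (A + B) + i * f B := by rw [hα]; exact frob A B
  have hβq : β ^ 2 ^ m = f (C + D) + i * f D := by rw [hβ]; exact frob C D
  have hN : α ^ (2 ^ m + 1) = f (A ^ 2 + A * B + k * B ^ 2) := by
    rw [pow_succ, hαq, hα]
    rw [prod A B (A + B) B,
      show A * (A + B) + k * B * B = A ^ 2 + A * B + k * B ^ 2 from by ring,
      show (A + B) * B + A * B + B * B = 0 from by linear_combination (A * B + B * B) * h2F]
    rw [map_zero, mul_zero, add_zero]
  have hβN : β ^ (2 ^ m + 1) = f (C ^ 2 + C * D + k * D ^ 2) := by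
    rw [pow_succ, hβq, hβ]
    rw [prod C D (C + D) D,
      show C * (C + D) + k * D * D = C ^ 2 + C * D + k * D ^ 2 from by ring,
      show (C + D) * D + C * D + D * D = 0 from by linear_combination (C * D + D * D) * h2F]
    rw [map_zero, mul_zero, add_zero]
  have hNne : A ^ 2 + A * B + k * B ^ 2 ≠ 0 := by
    intro h
    have : α ^ (2 ^ m + 1) = 0 := by rw [hN, h, map_zero]
    exact pow_ne_zero _ hα0 this
  have hsumα : α + α ^ 2 ^ m = f B := by
    rw [hαq, hα, map_add]; linear_combination (f A + i * f B) * h2E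
  have hsumβ : β + β ^ 2 ^ m = f D := by
    rw [hβq, hβ, map_add]; linear_combination (f C + i * f D) * h2E
  have hβiff : β = α ^ (2 ^ m - 1) ↔ β * α = α ^ 2 ^ m := by
    have hpow : α ^ (2 ^ m - 1) * α = α ^ 2 ^ m := by
      rw [← pow_succ]; congr 1; omega
    constructor
    · intro h; rw [h, hpow]
    · intro h; exact mul_right_cancel₀ hα0 (h.trans hpow.symm)
  have βrange : β ∈ Set.range f ↔ D = 0 := by
    constructor
    · rintro ⟨t, ht⟩
      have h0 : f (C + t) + i * f D = 0 := by
        rw [hβ] at ht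
        rw [map_add]
        linear_combination -ht + f t * h2E
      exact (indep _ _ h0).2
    · intro h; exact ⟨C, by rw [hβ, h, map_zero, mul_zero, add_zero]⟩
  have htr : traceSum m (1 + 1 / α ^ (2 ^ m + 1))
      = f (traceSum m (1 + 1 / (A ^ 2 + A * B + k * B ^ 2))) := by
    rw [hN, show (1 : E) + 1 / f (A ^ 2 + A * B + k * B ^ 2)
        = f (1 + 1 / (A ^ 2 + A * B + k * B ^ 2)) by
      simp only [map_add, map_one, map_div₀]]
    exact traceSum_map' f m _
  have htr_iff : traceSum m (1 + 1 / α ^ (2 ^ m + 1)) = 0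
      ↔ traceSum m (1 + 1 / (A ^ 2 + A * B + k * B ^ 2)) = 0 := by
    rw [htr]
    constructor
    · intro h; exact inj (by rw [h, map_zero])
    · intro h; rw [h, map_zero]
  -- shared algebraic consequences
  have mkND : A * D = B * (C + D + 1) → k * D ^ 2 + C ^ 2 + C * D + 1 = 0 →
      (A ^ 2 + A * B + k * B ^ 2) * D ^ 2 = B ^ 2 * D := by
    intro hAD hn
    linear_combination (A * D + B * (C + D + 1) + B * D) * hAD + B ^ 2 * hn
      + B ^ 2 * (C * D + D ^ 2 + C + D) * h2F
  constructor
  · rintro ⟨hb, hbr, htr0, hne⟩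
    have hba : β * α = α ^ 2 ^ m := hβiff.mp hb
    have hexp : f (A * C + k * B * D) + i * f (C * B + A * D + B * D)
        = f (A + B) + i * f B := by
      rw [← prod A B C D, ← hβ, ← hα, hba, hαq]
    have key : f ((A * C + k * B * D) + (A + B)) + i * f ((C * B + A * D + B * D) + B) = 0 := by
      rw [map_add f (A * C + k * B * D) (A + B), map_add f (C * B + A * D + B * D) B]
      linear_combination hexp + (f (A + B) + i * f B) * h2E
    obtain ⟨e1, e2⟩ := indep _ _ key
    have hD : D ≠ 0 := fun h => hbr (βrange.mpr h)
    have hBneD : B ≠ D := by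
      intro h; apply hne; rw [hsumα, hsumβ, h]
    have hB : B ≠ 0 := by
      intro hB0
      have h' : A * D = 0 := by linear_combination e2 - (C + D + 1) * hB0
      have hA0 : A = 0 := by
        rcases mul_eq_zero.mp h' with h | h
        · exact h
        · exact absurd h hD
      apply hα0; rw [hα, hA0, hB0]; simp
    -- norm of beta is 1
    have hαq2 : α ^ ((2 ^ m) ^ 2) = α := by rw [← hE]; exact FiniteField.pow_card α
    have h1 : β ^ (2 ^ m + 1) * α ^ (2 ^ m + 1) = 1 * α ^ (2 ^ m + 1) := by
      rw [one_mul, ← mul_pow, hba, ← pow_mul,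
        show 2 ^ m * (2 ^ m + 1) = (2 ^ m) ^ 2 + 2 ^ m from by ring, pow_add, hαq2,
        pow_succ]
      ring
    have hβ1 : β ^ (2 ^ m + 1) = 1 := mul_right_cancel₀ (pow_ne_zero _ hα0) h1
    have hnormF : C ^ 2 + C * D + k * D ^ 2 = 1 := by
      apply inj; rw [← hβN, hβ1, map_one]
    have hnorm0 : k * D ^ 2 + C ^ 2 + C * D + 1 = 0 := by
      linear_combination hnormF + h2F
    have hAD : A * D = B * (C + D + 1) := by
      linear_combination e2 - (C * B + B * D + B) * h2F
    have hND := mkND hAD hnorm0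
    have hA : A = B * (C + D + 1) / D := by
      rw [eq_div_iff hD]; exact hAD
    refine ⟨hA, hnorm0, ?_, ?_⟩
    · intro h
      rcases mul_eq_zero.mp h with h | h
      · rcases mul_eq_zero.mp h with h | h
        · exact hB h
        · exact hD h
      · exact hBneD (by linear_combination h - D * h2F)
    · have hinv : D / B ^ 2 = 1 / (A ^ 2 + A * B + k * B ^ 2) := by
        rw [div_eq_div_iff (pow_ne_zero 2 hB) hNne, one_mul]
        have hD2 : D ^ 2 ≠ 0 := pow_ne_zero 2 hD
        apply mul_left_cancel₀ hD
        linear_combination hND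
      rw [hinv]
      exact htr_iff.mp htr0
  · rintro ⟨hA, hnorm0, hBD0, htrD⟩
    have hB : B ≠ 0 := fun h => hBD0 (by rw [h, zero_mul, zero_mul])
    have hD : D ≠ 0 := fun h => hBD0 (by rw [h, mul_zero, zero_mul])
    have hBpD : B + D ≠ 0 := fun h => hBD0 (by rw [h, mul_zero])
    have hAD : A * D = B * (C + D + 1) := by
      rw [hA]; field_simp
    have e2 : C * B + A * D + B * D + B = 0 := by
      linear_combination hAD + (C * B + B * D + B) * h2F
    have e1D : (A * C + k * B * D + (A + B)) * D = 0 := by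
      linear_combination (C + 1) * hAD + B * hnorm0 + B * (C + D) * h2F
    have e1 : A * C + k * B * D + (A + B) = 0 := by
      rcases mul_eq_zero.mp e1D with h | h
      · exact h
      · exact absurd h hD
    have hba : β * α = α ^ 2 ^ m := by
      rw [hβ, hα, prod A B C D, frob A B,
        show A * C + k * B * D = A + B from by linear_combination e1 - (A + B) * h2F,
        show C * B + A * D + B * D = B from by linear_combination e2 - B * h2F]
    have hND := mkND hAD hnorm0
    refine ⟨hβiff.mpr hba, fun h => hD (βrange.mp h), ?_, ?_⟩
    · apply htr_iff.mpr
      have hinv : 1 / (A ^ 2 + A * B + k * B ^ 2) = D / B ^ 2 := by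
        rw [div_eq_div_iff hNne (pow_ne_zero 2 hB), one_mul]
        apply mul_left_cancel₀ hD
        linear_combination -hND
      rw [hinv]
      exact htrD
    · rw [hsumα, hsumβ]
      intro h
      have : B = D := inj h
      exact hBpD (by rw [this, CharTwo.add_self_eq_zero])
end

section
/- Let q = 2^m with m odd, and let A, B, k ∈ F_q with B ≠ 0, Tr(k) = 1, and A^2 + AB + B^2k + B = 0. Let ω ∈ F_4 \ F_2 satisfy ω^2 + ω + 1 = 0. Then the polynomial B x^2 + Bxy + By^2 + Ax + Ay + A + Bk + 1 factors over F_{q^2} as B·(x + ωy + A/(Bω))·(x + ω^2 y + Aω/B), and neither linear factor is defined over F_q (since ω ∉ F_q when m is odd). -/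
lemma Nat.two_pow_mod_three_of_odd {m : ℕ} (hm : Odd m) : 2 ^ m % 3 = 2 := by
  obtain ⟨t, rfl⟩ := hm
  rw [pow_succ, pow_mul, Nat.mul_mod, Nat.pow_mod]
  norm_num

lemma FiniteField.two_eq_zero_of_card_eq_two_pow {F : Type*} [Field F] [Fintype F] {m : ℕ}
    (hm : m ≠ 0) (hF : Fintype.card F = 2 ^ m) : (2 : F) = 0 := by
  have h := FiniteField.cast_card_eq_zero F
  rw [hF, Nat.cast_pow, Nat.cast_ofNat] at h
  exact pow_eq_zero_iff hm |>.mp h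

lemma FiniteField.sq_add_self_add_one_ne_zero {F : Type*} [Field F] [Fintype F]
    (hF : Fintype.card F % 3 = 2) (z : F) : z ^ 2 + z + 1 ≠ 0 := by
  intro hz
  have hz0 : z ≠ 0 := by rintro rfl; simp at hz
  have hdvd3 : orderOf z ∣ 3 := orderOf_dvd_of_pow_eq_one (by linear_combination (z - 1) * hz)
  have hdvdq : orderOf z ∣ Fintype.card F - 1 :=
    orderOf_dvd_of_pow_eq_one (FiniteField.pow_card_sub_one_eq_one z hz0)
  have hz1 : z = 1 := by
    rcases Nat.prime_three.eq_one_or_self_of_dvd _ hdvd3 with h | h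
    · exact orderOf_eq_one_iff.mp h
    · rw [h] at hdvdq; omega
  subst hz1
  have h3 : (3 : F) = 0 := by linear_combination hz
  have hq : ((Fintype.card F : ℕ) : F) = 0 := FiniteField.cast_card_eq_zero F
  rw [← Nat.div_add_mod (Fintype.card F) 3, hF] at hq
  push_cast at hq
  exact one_ne_zero (by linear_combination ((Fintype.card F / 3 : ℕ) + 1 : F) * h3 - hq :
    (1 : F) = 0)

lemma sq_add_mul_add_sq_add_eq_mul_of_charTwo {E : Type*} [Field E] (h2 : (2 : E) = 0)
    {a b c ω : E} (hb : b ≠ 0) (hω : ω ^ 2 + ω + 1 = 0)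
    (habc : a ^ 2 + a * b + b ^ 2 * c + b = 0) (x y : E) :
    b * x ^ 2 + b * x * y + b * y ^ 2 + a * x + a * y + (a + b * c + 1) =
      b * (x + ω * y + a / (b * ω)) * (x + ω ^ 2 * y + a * ω / b) := by
  have hω0 : ω ≠ 0 := by rintro rfl; simp at hω
  field_simp
  linear_combination (-(b ^ 2 * x * y * ω) - b ^ 2 * y ^ 2 * ω * (ω - 1) - a * b * x -
      a * b * y * ω) * hω + ω * habc +
    (b ^ 2 * x * y * ω + a * b * x * ω + a * b * y * ω - a ^ 2 * ω) * h2

theorem stmt_13_general {F E : Type*} [Field F] [Fintype F] [Field E] [Algebra F E]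
    (m : ℕ) (hm : Odd m) (hF : Fintype.card F = 2 ^ m)
    (A B k : F) (hB : B ≠ 0)
    (hABk : A ^ 2 + A * B + B ^ 2 * k + B = 0)
    (ω : E) (hω : ω ^ 2 + ω + 1 = 0) :
    (∀ x y : E,
        algebraMap F E B * x ^ 2 + algebraMap F E B * x * y + algebraMap F E B * y ^ 2 +
          algebraMap F E A * x + algebraMap F E A * y +
          (algebraMap F E A + algebraMap F E B * algebraMap F E k + 1) =
        algebraMap F E B *
          (x + ω * y + algebraMap F E A / (algebraMap F E B * ω)) *
          (x + ω ^ 2 * y + algebraMap F E A * ω / algebraMap F E B)) ∧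
      ω ∉ Set.range (algebraMap F E) := by
  have h2 : (2 : E) = 0 := by
    rw [← map_ofNat (algebraMap F E) 2,
      FiniteField.two_eq_zero_of_card_eq_two_pow hm.pos.ne' hF, map_zero]
  have hABk' := congrArg (algebraMap F E) hABk
  simp only [map_add, map_mul, map_pow, map_zero] at hABk'
  refine ⟨sq_add_mul_add_sq_add_eq_mul_of_charTwo h2
    ((map_ne_zero (algebraMap F E)).mpr hB) hω hABk', ?_⟩
  rintro ⟨z, rfl⟩
  refine FiniteField.sq_add_self_add_one_ne_zero (hF ▸ Nat.two_pow_mod_three_of_odd hm) z ?_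
  exact (algebraMap F E).injective (by simpa using hω)

/-- For `m` odd and `A^2 + AB + B^2 k + B = 0`, the conic
`B x^2 + Bxy + By^2 + Ax + Ay + A + Bk + 1` splits over `F_{q^2}` into two lines
involving a primitive cube root of unity `ω`, and `ω ∉ F_q`. -/
theorem stmt_13 {F E : Type*} [Field F] [Fintype F] [Field E] [Fintype E] [Algebra F E]
    (m : ℕ) (hm : Odd m) (hF : Fintype.card F = 2 ^ m) (hE : Fintype.card E = (2 ^ m) ^ 2)
    (A B k : F) (hB : B ≠ 0) (hk : traceSum m k = 1)
    (hABk : A ^ 2 + A * B + B ^ 2 * k + B = 0)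
    (ω : E) (hω : ω ^ 2 + ω + 1 = 0) :
    (∀ x y : E,
        algebraMap F E B * x ^ 2 + algebraMap F E B * x * y + algebraMap F E B * y ^ 2 +
          algebraMap F E A * x + algebraMap F E A * y +
          (algebraMap F E A + algebraMap F E B * algebraMap F E k + 1) =
        algebraMap F E B *
          (x + ω * y + algebraMap F E A / (algebraMap F E B * ω)) *
          (x + ω ^ 2 * y + algebraMap F E A * ω / algebraMap F E B)) ∧
      ω ∉ Set.range (algebraMap F E) :=
  stmt_13_general m hm hF A B k hB hABk ω hω
end

section
/- Let q = 2^m and suppose f(x) = x + α x^{q(q-1)+1} + β x^{2(q-1)+1} with α, β ∈ F_{q^2}^*, β = α^{q-1}, and Tr(1 + 1/α^{q+1}) = 0. Then f permutes F_{q^2}. -/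
/-!
Write `q = 2^m` and `f(x) = x · h(x^{q-1})` with `h(u) = 1 + α u^q + β u²`. Since `x^{q-1}` lies in
the group `μ_{q+1}` of `(q+1)`-st roots of unity, `f` permutes `F_{q²}` as soon as `h` has no zero
on `μ_{q+1}` and `u ↦ u h(u)^{q-1}` is injective there. On `μ_{q+1}` we have `u^q = u⁻¹`, so with
`a = α`, `b = α^q` both conditions become statements about the cubics `D(u) = b u³ + a u + a²` and
`N(u) = b² u³ + b u² + a`, and `u h(u)^{q-1}` is a constant multiple of `N(u) / D(u)`.

A zero `u` of `D` on `μ_{q+1}` makes `u / a` a root of `X² + X + 1 + 1/(ab)`, which lies in `F_q`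
because `Tr(1 + 1/(ab)) = 0`; this forces `u = a`, but `D(a) = b a³ ≠ 0`. A collision
`N(u) / D(u) = N(v) / D(v)` with `u ≠ v` produces a root `w` of the same quadratic with
`w^q = w + 1`, so that `Tr(1 + 1/(ab)) = w^q + w = 1`.
-/

open Function

theorem traceSum_sq_add_self {F : Type*} [Field F] [CharP F 2] (m : ℕ) (θ : F) :
    traceSum m (θ ^ 2 + θ) = θ ^ 2 ^ m + θ := by
  have telescope (j : ℕ) : (θ ^ 2 + θ) ^ 2 ^ j = θ ^ 2 ^ (j + 1) - θ ^ 2 ^ j := by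
    rw [CharTwo.sub_eq_add, add_pow_char_pow, ← pow_mul, ← pow_succ']
  rw [traceSum, Finset.sum_congr rfl fun j _ => telescope j,
    Finset.sum_range_sub (fun j => θ ^ 2 ^ j), CharTwo.sub_eq_add, pow_zero, pow_one]

theorem injective_mul_comp_pow_sub_one {E : Type*} [Field E] [Fintype E] {q : ℕ} (hq : 0 < q)
    (hE : Fintype.card E = q ^ 2) (h : E → E) (hne : ∀ u : E, u ^ (q + 1) = 1 → h u ≠ 0)
    (hinj : ∀ u v : E, u ^ (q + 1) = 1 → v ^ (q + 1) = 1 →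
      u * h u ^ q * h v = v * h v ^ q * h u → u = v) :
    Injective fun x : E => x * h (x ^ (q - 1)) := by
  have hcircle (x : E) (hx : x ≠ 0) : (x ^ (q - 1)) ^ (q + 1) = 1 := by
    rw [← pow_mul, mul_comm, ← Nat.sq_sub_sq, one_pow, ← hE]
    exact FiniteField.pow_card_sub_one_eq_one x hx
  have hval (x : E) (hx : x ≠ 0) : x * h (x ^ (q - 1)) ≠ 0 :=
    mul_ne_zero hx (hne _ (hcircle x hx))
  intro x y hxy
  simp only at hxy
  rcases eq_or_ne x 0 with rfl | hx
  · by_contra hy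
    exact hval y (Ne.symm hy) (by rw [← hxy, zero_mul])
  rcases eq_or_ne y 0 with rfl | hy
  · exact absurd (by rw [hxy, zero_mul]) (hval x hx)
  set u := x ^ (q - 1)
  set v := y ^ (q - 1)
  have hconj : u * x * h u ^ q = v * y * h v ^ q := by
    have := congrArg (· ^ q) hxy
    rwa [mul_pow, mul_pow, ← pow_sub_one_mul hq.ne' x, ← pow_sub_one_mul hq.ne' y] at this
  have huv : u = v := hinj u v (hcircle x hx) (hcircle y hy) <|
    mul_left_cancel₀ (mul_ne_zero hx hy) <| by
      linear_combination y * h v * hconj - v * y * h v ^ q * hxy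
  rw [huv] at hxy
  exact mul_right_cancel₀ (hne v (hcircle y hy)) hxy

theorem mul_factor_eq_cubic_of_pow_succ_eq_one {F : Type*} [Field F] {q : ℕ} {α β u : F}
    (hβ : β * α = α ^ q) (hu : u ^ (q + 1) = 1) :
    α * (u * (1 + α * u ^ q + β * u ^ 2)) = α ^ q * u ^ 3 + α * u + α ^ 2 := by
  rw [pow_succ] at hu
  linear_combination α ^ 2 * hu + u ^ 3 * hβ

theorem mul_factor_pow_eq_cubic_of_pow_succ_eq_one {F : Type*} [Field F] [CharP F 2] {m : ℕ}
    {α β u : F} (hβ : β * α = α ^ 2 ^ m) (hα : (α ^ 2 ^ m) ^ 2 ^ m = α)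
    (hu : u ^ (2 ^ m + 1) = 1) :
    α ^ 2 ^ m * u ^ 2 * (1 + α * u ^ 2 ^ m + β * u ^ 2) ^ 2 ^ m
      = (α ^ 2 ^ m) ^ 2 * u ^ 3 + α ^ 2 ^ m * u ^ 2 + α := by
  rw [pow_succ] at hu
  have hβq : β ^ 2 ^ m * α ^ 2 ^ m = α := by rw [← mul_pow, hβ, hα]
  have huq : (u ^ 2 ^ m) ^ 2 ^ m = u := by
    rw [eq_inv_of_mul_eq_one_left hu, inv_pow, inv_eq_of_mul_eq_one_right hu]
  rw [add_pow_char_pow, add_pow_char_pow, one_pow, mul_pow, mul_pow, huq,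
    pow_right_comm u 2 (2 ^ m)]
  linear_combination hβq + α ^ 2 ^ m * β ^ 2 ^ m * (u ^ 2 ^ m * u + 1) * hu

section ConjugatePair

-- `grind` normalises ring expressions modulo the characteristic, which `ring` does not.
variable {F : Type*} [Field F] [CharP F 2] {m : ℕ} {a b : F}

theorem cubic_ne_zero_of_traceSum_eq_zero (ha : a ≠ 0) (hab : a ^ 2 ^ m = b)
    (hba : b ^ 2 ^ m = a) (htr : traceSum m (1 + (a * b)⁻¹) = 0) {u : F}
    (hu : u ^ (2 ^ m + 1) = 1) : b * u ^ 3 + a * u + a ^ 2 ≠ 0 := by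
  intro hD
  have hb : b ≠ 0 := hab ▸ pow_ne_zero _ ha
  rw [pow_succ] at hu
  set U := u ^ 2 ^ m
  have hDconj : a * U ^ 3 + b * U + b ^ 2 = 0 := by
    have := congrArg (· ^ 2 ^ m) hD
    simpa only [add_pow_char_pow, mul_pow, pow_right_comm _ _ (2 ^ m), hab, hba,
      zero_pow (pow_ne_zero m two_ne_zero)] using this
  have hN : b ^ 2 * u ^ 3 + b * u ^ 2 + a = 0 := by
    linear_combination u ^ 3 * hDconj - (a * ((U * u) ^ 2 + U * u + 1) + b * u ^ 2) * hu
  have hy : (u / a) ^ 2 + u / a = 1 + (a * b)⁻¹ := by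
    field_simp
    linear_combination (norm := grind) b * hD - hN
  have hyq : (u / a) ^ 2 ^ m = u / a := by
    have := traceSum_sq_add_self m (u / a)
    rw [hy, htr] at this
    linear_combination (norm := grind) this
  have hau : a = b * u ^ 2 := by
    rw [div_pow, hab] at hyq
    field_simp at hyq
    linear_combination u * hyq - a * hu
  have hua : u = a := by
    have : a * b * (u - a) = 0 := by
      linear_combination (norm := grind) b * hD - hN - hau
    exact sub_eq_zero.mp ((mul_eq_zero.mp this).resolve_left (mul_ne_zero ha hb))
  rw [hua] at hD
  have : b * a ^ 3 = 0 := by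
    linear_combination (norm := grind) hD
  exact mul_ne_zero hb (pow_ne_zero 3 ha) this

theorem eq_of_cubic_ratio_eq (ha : a ≠ 0) (hab : a ^ 2 ^ m = b)
    (hba : b ^ 2 ^ m = a) (htr : traceSum m (1 + (a * b)⁻¹) = 0) {u v : F}
    (hu : u ^ (2 ^ m + 1) = 1) (hv : v ^ (2 ^ m + 1) = 1)
    (huv : (b ^ 2 * u ^ 3 + b * u ^ 2 + a) * (b * v ^ 3 + a * v + a ^ 2)
      = (b ^ 2 * v ^ 3 + b * v ^ 2 + a) * (b * u ^ 3 + a * u + a ^ 2)) : u = v := by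
  by_contra hne
  have hb : b ≠ 0 := hab ▸ pow_ne_zero _ ha
  have hs : u + v ≠ 0 := fun h => hne (CharTwo.add_eq_zero.mp h)
  rw [pow_succ] at hu hv
  set w := (b * u * v + a * b * u + a) / (a * b * (u + v))
  have hQ : (b * u * v + a * b * u + a) ^ 2 + (b * u * v + a * b * u + a) * (a * b * (u + v))
      + (a * b) ^ 2 * (u + v) ^ 2 + a * b * (u + v) ^ 2 = 0 := by
    refine (mul_eq_zero.mp ?_).resolve_left hs
    linear_combination (norm := grind) huv
  have hw : w ^ 2 + w = 1 + (a * b)⁻¹ := by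
    simp only [w]
    field_simp
    linear_combination (norm := grind) hQ
  have hwq : w ^ 2 ^ m = w + 1 := by
    have hu0 : u ≠ 0 := right_ne_zero_of_mul_eq_one hu
    have hv0 : v ≠ 0 := right_ne_zero_of_mul_eq_one hv
    rw [← iterateFrobenius_def (R := F) 2 m]
    simp only [w, map_div₀, map_add, map_mul, iterateFrobenius_def, hab, hba,
      eq_inv_of_mul_eq_one_left hu, eq_inv_of_mul_eq_one_left hv]
    have hvu : v + u ≠ 0 := by rwa [add_comm]
    field_simp
    grind
  have := traceSum_sq_add_self m w
  rw [hw, htr, hwq] at this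
  exact one_ne_zero (by linear_combination (norm := grind) this)

end ConjugatePair

theorem stmt_17_general {E : Type*} [Field E] [Fintype E] (m : ℕ)
    (hE : Fintype.card E = (2 ^ m) ^ 2) (α β : E) (hαβ : α * β ≠ 0)
    (h1 : β = α ^ (2 ^ m - 1)) (h2 : traceSum m (1 + 1 / α ^ (2 ^ m + 1)) = 0) :
    Function.Bijective
      (fun x : E => x + α * x ^ (2 ^ m * (2 ^ m - 1) + 1) + β * x ^ (2 * (2 ^ m - 1) + 1)) := by
  have : CharP E 2 := charP_of_card_eq_prime_pow (hE.trans (pow_mul 2 m 2).symm)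
  have hα : α ≠ 0 := left_ne_zero_of_mul hαβ
  have hfrob : (α ^ 2 ^ m) ^ 2 ^ m = α := by
    rw [← pow_mul, ← sq, ← hE, FiniteField.pow_card]
  have hβ : β * α = α ^ 2 ^ m := by rw [h1, ← pow_succ, Nat.sub_add_cancel Nat.one_le_two_pow]
  have htr : traceSum m (1 + (α * α ^ 2 ^ m)⁻¹) = 0 := by
    rwa [one_div, pow_succ, mul_comm] at h2
  have hf : (fun x : E => x + α * x ^ (2 ^ m * (2 ^ m - 1) + 1) + β * x ^ (2 * (2 ^ m - 1) + 1))
      = fun x => x * (1 + α * (x ^ (2 ^ m - 1)) ^ 2 ^ m + β * (x ^ (2 ^ m - 1)) ^ 2) := by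
    funext x
    rw [← pow_mul, ← pow_mul, mul_comm (2 ^ m - 1), mul_comm (2 ^ m - 1)]
    ring
  rw [← Finite.injective_iff_bijective, hf]
  refine injective_mul_comp_pow_sub_one (Nat.two_pow_pos m) hE
    (fun u => 1 + α * u ^ 2 ^ m + β * u ^ 2) (fun u hu hzero => ?_) (fun u v hu hv huv => ?_)
  · refine cubic_ne_zero_of_traceSum_eq_zero hα rfl hfrob htr hu ?_
    rw [← mul_factor_eq_cubic_of_pow_succ_eq_one hβ hu, hzero, mul_zero, mul_zero]
  · refine eq_of_cubic_ratio_eq hα rfl hfrob htr hu hv ?_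
    rw [← mul_factor_eq_cubic_of_pow_succ_eq_one hβ hu,
      ← mul_factor_eq_cubic_of_pow_succ_eq_one hβ hv,
      ← mul_factor_pow_eq_cubic_of_pow_succ_eq_one hβ hfrob hu,
      ← mul_factor_pow_eq_cubic_of_pow_succ_eq_one hβ hfrob hv]
    linear_combination α * α ^ 2 ^ m * u * v * huv

/-- Sufficiency, case 1 (Tu–Zeng–Li–Helleseth): if `β = α^{q-1}` and
`Tr(1 + 1/α^{q+1}) = 0` then `f(x) = x + α x^{q(q-1)+1} + β x^{2(q-1)+1}` permutes `F_{q^2}`. -/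
theorem stmt_17 {E : Type*} [Field E] [Fintype E] (m : ℕ) (hm : 0 < m)
    (hE : Fintype.card E = (2 ^ m) ^ 2) (α β : E) (hαβ : α * β ≠ 0)
    (h1 : β = α ^ (2 ^ m - 1)) (h2 : traceSum m (1 + 1 / α ^ (2 ^ m + 1)) = 0) :
    Function.Bijective
      (fun x : E => x + α * x ^ (2 ^ m * (2 ^ m - 1) + 1) + β * x ^ (2 * (2 ^ m - 1) + 1)) :=
  stmt_17_general m hE α β hαβ h1 h2
end

section
/- Let q = 2^m, k ∈ F_q with Tr(k) = 1, i ∈ F_{q^2} with i^2 = i + k, and A, B, C, D ∈ F_q with B = D, A + C + 1 = 0, and B = 0. If additionally β = C + iD ≠ 0 and the curve has no F_q-rational component other than x = y, then A = 1 leads to C = 0 and D = 0, contradicting β ≠ 0; hence in the degenerate case γ22 = 0 with B = D = 0 and A + C + 1 = 0, the polynomial f_{α,β} cannot be a permutation polynomial. -/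
/-- In the degenerate case `γ₂₂ = 0` with `B = D = 0` and `A + C + 1 = 0` (and `β ≠ 0`),
the polynomial `f_{α,β}` cannot be a permutation polynomial of `F_{q^2}`. -/
theorem stmt_19 {F E : Type*} [Field F] [Fintype F] [Field E] [Fintype E] [Algebra F E]
    (m : ℕ) (hm : 3 ≤ m) (hF : Fintype.card F = 2 ^ m) (hE : Fintype.card E = (2 ^ m) ^ 2)
    (k : F) (hk : traceSum m k = 1) (i : E) (hi : i ^ 2 = i + algebraMap F E k)
    (A B C D : F) (α β : E)
    (hα : α = algebraMap F E A + i * algebraMap F E B)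
    (hβ : β = algebraMap F E C + i * algebraMap F E D)
    (hBD : B = D) (hB : B = 0) (hAC : A + C + 1 = 0) (hβ0 : β ≠ 0) :
    ¬ Function.Bijective
      (fun x : E => x + α * x ^ (2 ^ m * (2 ^ m - 1) + 1) + β * x ^ (2 * (2 ^ m - 1) + 1)) := by
  intro h
  have hD : D = 0 := hBD ▸ hB
  have hα' : α = algebraMap F E A := by simp [hα, hB]
  have hβ' : β = algebraMap F E C := by simp [hβ, hD]
  have h10 : (fun x : E => x + α * x ^ (2 ^ m * (2 ^ m - 1) + 1)
      + β * x ^ (2 * (2 ^ m - 1) + 1)) 1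
      = (fun x : E => x + α * x ^ (2 ^ m * (2 ^ m - 1) + 1)
      + β * x ^ (2 * (2 ^ m - 1) + 1)) 0 := by
    simp only [one_pow, mul_one, zero_pow (Nat.succ_ne_zero _), mul_zero, add_zero, zero_add]
    have : (1 : E) + α + β = algebraMap F E (A + C + 1) := by
      rw [hα', hβ', map_add, map_add, map_one]; ring
    rw [this, hAC, map_zero]
  exact one_ne_zero (h.injective h10)
end
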